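/- (Gottschalk–Hedlund, improved form) Let (Ω,σ) be a minimal topological dynamical system, f ∈ C⁰(Ω), and f̄ the ergodic minimizing value of f. If for every ω ∈ Ω, inf_{n≥1} Σ_{k=0}^{n-1}(f - f̄)(σ^k(ω)) > -∞ (pointwise boundedness below of Birkhoff sums), then there exists a continuous function u : Ω → ℝ such that f(ω) - f̄ = u(σ(ω)) - u(ω) for all ω ∈ Ω. -/
import Mathlib


open MeasureTheory Filter Topology

noncomputable section

variable {Ω : Type*}

/-- `μ` is a `σ`-invariant Borel probability measure. -/
def IsInvProb [MeasurableSpace Ω] (σ : Ω → Ω) (μ : Measure Ω) : Prop :=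
  IsProbabilityMeasure μ ∧ Measure.map σ μ = μ

/-- Birkhoff sum `∑_{k=0}^{n-1} g(σ^k ω)`. -/
def birk (σ : Ω → Ω) (g : Ω → ℝ) (n : ℕ) (ω : Ω) : ℝ :=
  ∑ k ∈ Finset.range n, g (σ^[k] ω)

/-- The transfer function `u(ω) = - inf_{n ≥ 1} ∑_{k=0}^{n-1} (f - f̄)(σ^k ω)`. -/
def uFn (σ : Ω → Ω) (f : Ω → ℝ) (fbar : ℝ) (ω : Ω) : ℝ :=
  -(⨅ n : ℕ, birk σ (fun x => f x - fbar) (n + 1) ω)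

/-- The support of a measure: points all of whose open neighborhoods have positive measure. -/
def msupport [TopologicalSpace Ω] [MeasurableSpace Ω] (μ : Measure Ω) : Set Ω :=
  {ω | ∀ U : Set Ω, IsOpen U → ω ∈ U → 0 < μ U}

/-- `μ` is a minimizing measure for `f` with ergodic minimizing value `fbar`. -/
def IsMinimizing [MeasurableSpace Ω] (σ : Ω → Ω) (f : Ω → ℝ) (fbar : ℝ)
    (μ : Measure Ω) : Prop :=
  IsInvProb σ μ ∧ ∫ x, f x ∂μ = fbar

/-- The Mather set: union of supports of minimizing measures. -/
def MatherSet [TopologicalSpace Ω] [MeasurableSpace Ω] (σ : Ω → Ω) (f : Ω → ℝ)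
    (fbar : ℝ) : Set Ω :=
  {ω | ∃ μ : Measure Ω, IsMinimizing σ f fbar μ ∧ ω ∈ msupport μ}

/-- `fbar` is the minimum of `∫ f dμ` over invariant probability measures. -/
def IsErgMinValue [MeasurableSpace Ω] (σ : Ω → Ω) (f : Ω → ℝ) (fbar : ℝ) : Prop :=
  IsLeast {x : ℝ | ∃ μ : Measure Ω, IsInvProb σ μ ∧ ∫ w, f w ∂μ = x} fbar

lemma birk_succ (σ : Ω → Ω) (g : Ω → ℝ) (n : ℕ) (ω : Ω) :
    birk σ g (n+1) ω = birk σ g n ω + g (σ^[n] ω) := Finset.sum_range_succ _ _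

lemma birk_add (σ : Ω → Ω) (g : Ω → ℝ) (n m : ℕ) (ω : Ω) :
    birk σ g (n + m) ω = birk σ g n ω + birk σ g m (σ^[n] ω) := by
  induction m with
  | zero => simp [birk]
  | succ m ih =>
    rw [← Nat.add_assoc, birk_succ, ih, birk_succ,
      ← Function.iterate_add_apply, Nat.add_comm m n]
    ring

lemma birk_cont [TopologicalSpace Ω] {σ : Ω → Ω} (hσ : Continuous σ) {g : Ω → ℝ}
    (hg : Continuous g) (n : ℕ) : Continuous (birk σ g n) := by
  unfold birk
  exact continuous_finset_sum _ fun k _ => hg.comp (hσ.iterate k)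

lemma birk_abs_le [TopologicalSpace Ω] {σ : Ω → Ω} {g : Ω → ℝ} {B : ℝ}
    (hB : ∀ x, |g x| ≤ B) (n : ℕ) (ω : Ω) : |birk σ g n ω| ≤ n * B := by
  calc |birk σ g n ω| ≤ ∑ k ∈ Finset.range n, |g (σ^[k] ω)| :=
        Finset.abs_sum_le_sum_abs _ _
    _ ≤ ∑ k ∈ Finset.range n, B := Finset.sum_le_sum fun k _ => hB _
    _ = n * B := by simp [mul_comm]

section meas
variable [MetricSpace Ω] [CompactSpace Ω] [MeasurableSpace Ω] [BorelSpace Ω]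

set_option linter.unusedSectionVars false in
lemma map_iterate {σ : Ω → Ω} (hσ : Continuous σ) {μ : Measure Ω}
    (hinv : Measure.map σ μ = μ) (k : ℕ) : Measure.map (σ^[k]) μ = μ := by
  induction k with
  | zero => simp
  | succ k ih =>
    rw [Function.iterate_succ,
      ← Measure.map_map (hσ.iterate k).measurable hσ.measurable, hinv, ih]

lemma cont_integrable {μ : Measure Ω} [IsFiniteMeasure μ] {g : Ω → ℝ}
    (hg : Continuous g) : Integrable g μ :=
  hg.integrable_of_hasCompactSupport
    (IsCompact.of_isClosed_subset isCompact_univ (isClosed_tsupport g) (Set.subset_univ _))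

lemma integral_birk_eq {σ : Ω → Ω} (hσ : Continuous σ) {μ : Measure Ω}
    [IsProbabilityMeasure μ] (hinv : Measure.map σ μ = μ) {g : Ω → ℝ} (hg : Continuous g)
    (n : ℕ) : ∫ x, birk σ g n x ∂μ = n * ∫ x, g x ∂μ := by
  have hit : ∀ k : ℕ, ∫ x, g (σ^[k] x) ∂μ = ∫ x, g x ∂μ := by
    intro k
    conv_rhs => rw [← map_iterate hσ hinv k]
    rw [integral_map ((hσ.iterate k).measurable.aemeasurable)]
    exact hg.aestronglyMeasurable
  unfold birk
  rw [integral_finset_sum _ (fun k (_ : k ∈ Finset.range n) =>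
    (cont_integrable (hg.comp (hσ.iterate k)) : Integrable (fun x => g (σ^[k] x)) μ))]
  simp only [hit]
  simp [mul_comm]

lemma exists_nonpos_birk [Nonempty Ω] {σ : Ω → Ω} (hσ : Continuous σ) {g : Ω → ℝ}
    (hg : Continuous g) {μ : Measure Ω} [IsProbabilityMeasure μ]
    (hinv : Measure.map σ μ = μ) (hgint : ∫ x, g x ∂μ = 0) :
    ∃ ω₀ : Ω, ∀ n : ℕ, birk σ g (n+1) ω₀ ≤ 0 := by
  by_contra hcon
  push_neg at hcon
  -- finite subcover
  obtain ⟨s, hs⟩ := isCompact_univ.elim_finite_subcover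
    (fun n : ℕ => {ω | 0 < birk σ g (n+1) ω})
    (fun n => isOpen_lt continuous_const (birk_cont hσ hg (n+1)))
    (fun ω _ => by obtain ⟨n, hn⟩ := hcon ω; exact Set.mem_iUnion.2 ⟨n, hn⟩)
  set N : ℕ := s.sup id + 1 with hNdef
  have hN1 : 1 ≤ N := Nat.le_add_left 1 _
  -- the max function
  have hrne : (Finset.range N).Nonempty := ⟨0, Finset.mem_range.2 hN1⟩
  set F : Ω → ℝ := fun ω => (Finset.range N).sup' hrne (fun m => birk σ g (m+1) ω) with hF
  have hFcont : Continuous F :=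
    Continuous.finset_sup'_apply hrne (fun m _ => birk_cont hσ hg (m+1))
  have hFpos : ∀ ω, 0 < F ω := by
    intro ω
    obtain ⟨n, hns, hn⟩ := Set.mem_iUnion₂.1 (hs (Set.mem_univ ω))
    have hnN : n ∈ Finset.range N :=
      Finset.mem_range.2 (Nat.lt_succ_of_le (Finset.le_sup (f := id) hns))
    exact lt_of_lt_of_le hn (Finset.le_sup' (fun m => birk σ g (m+1) ω) hnN)
  obtain ⟨ωm, -, hωm⟩ := isCompact_univ.exists_isMinOn ⟨Classical.arbitrary Ω, trivial⟩
    hFcont.continuousOn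
  set ε : ℝ := F ωm with hε
  have hεpos : 0 < ε := hFpos ωm
  have hεle : ∀ ω, ε ≤ F ω := fun ω => hωm (Set.mem_univ ω)
  have hεex : ∀ ω : Ω, ∃ n : ℕ, 1 ≤ n ∧ n ≤ N ∧ ε ≤ birk σ g n ω := by
    intro ω
    obtain ⟨m, hm, hmax⟩ := Finset.exists_mem_eq_sup' hrne (fun m => birk σ g (m+1) ω)
    exact ⟨m+1, Nat.le_add_left 1 m, Finset.mem_range.1 hm,
      by rw [← hmax] at *; exact hεle ω⟩
  -- bound on g
  obtain ⟨ωb, -, hωb⟩ := isCompact_univ.exists_isMaxOn ⟨Classical.arbitrary Ω, trivial⟩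
    (hg.abs.continuousOn)
  set B : ℝ := |g ωb| with hB
  have hBle : ∀ x, |g x| ≤ B := fun x => hωb (Set.mem_univ x)
  have hB0 : 0 ≤ B := le_trans (abs_nonneg _) (hBle (Classical.arbitrary Ω))
  have hεNB : ε ≤ N * B := by
    obtain ⟨n, hn1, hnN, hnb⟩ := hεex (Classical.arbitrary Ω)
    calc ε ≤ birk σ g n _ := hnb
      _ ≤ |birk σ g n _| := le_abs_self _
      _ ≤ n * B := birk_abs_le hBle n _
      _ ≤ N * B := by
          have : (n:ℝ) ≤ N := Nat.cast_le.2 hnN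
          nlinarith
  have hNpos : (0:ℝ) < N := by exact_mod_cast hN1
  -- key growth estimate
  have key : ∀ m : ℕ, ∀ ω : Ω, (ε/N) * m - 2*(N*B) ≤ birk σ g m ω := by
    intro m
    induction m using Nat.strong_induction_on with
    | _ m ih =>
      intro ω
      by_cases hm : m ≤ N
      · have h1 := (abs_le.1 (birk_abs_le (σ := σ) hBle m ω)).1
        have hmN : (m:ℝ) ≤ N := Nat.cast_le.2 hm
        have h2 : (ε/N) * m ≤ ε := by
          rw [div_mul_eq_mul_div, div_le_iff₀ hNpos]
          nlinarith
        nlinarith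
      · push_neg at hm
        obtain ⟨n, hn1, hnN, hnb⟩ := hεex ω
        have hsplit : birk σ g m ω = birk σ g n ω + birk σ g (m - n) (σ^[n] ω) := by
          rw [← birk_add]; congr 1; omega
        have ihr := ih (m - n) (by omega) (σ^[n] ω)
        have hcast : ((m - n : ℕ) : ℝ) = (m:ℝ) - n := by
          rw [Nat.cast_sub (by omega)]
        rw [hcast] at ihr
        have h2 : (ε/N) * n ≤ ε := by
          rw [div_mul_eq_mul_div, div_le_iff₀ hNpos]
          have : (n:ℝ) ≤ N := Nat.cast_le.2 hnN
          nlinarith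
        have hexp : (ε/N) * ((m:ℝ) - n) = (ε/N)*m - (ε/N)*n := by ring
        rw [hexp] at ihr
        linarith
  -- contradiction via integration
  obtain ⟨m, hmgt⟩ := exists_nat_gt ((2*(N*B) + 1) / (ε/N))
  have hεN : (0:ℝ) < ε / N := div_pos hεpos hNpos
  have hptw : ∀ ω : Ω, (1:ℝ) ≤ birk σ g m ω := by
    intro ω
    have := key m ω
    have h3 : (2*(N*B) + 1) ≤ (ε/N) * m := by
      rw [div_lt_iff₀ hεN] at hmgt
      nlinarith
    linarith
  have hint : ∫ x, birk σ g m x ∂μ = 0 := by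
    rw [integral_birk_eq hσ hinv hg, hgint]; ring
  have : (1:ℝ) ≤ ∫ x, birk σ g m x ∂μ := by
    calc (1:ℝ) = ∫ _x, (1:ℝ) ∂μ := by simp
      _ ≤ ∫ x, birk σ g m x ∂μ :=
        integral_mono (integrable_const 1) (cont_integrable (birk_cont hσ hg m)) hptw
  linarith
end meas

lemma gh_main [MetricSpace Ω] [CompactSpace Ω] {σ : Ω → Ω} (hσ : Continuous σ)
    (hmin : ∀ ω : Ω, Dense (Set.range fun n : ℕ => σ^[n] ω))
    {g : Ω → ℝ} (hg : Continuous g) {ω₀ : Ω} {M : ℝ}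
    (hub : ∀ n : ℕ, birk σ g n ω₀ ≤ 0)
    (hlb : ∀ n : ℕ, -M ≤ birk σ g n ω₀) :
    ∃ u : Ω → ℝ, Continuous u ∧ ∀ ω : Ω, g ω = u (σ ω) - u ω := by
  classical
  set T : Ω × ℝ → Ω × ℝ := fun p => (σ p.1, p.2 + g p.1) with hT
  have hTcont : Continuous T :=
    (hσ.comp continuous_fst).prodMk (continuous_snd.add (hg.comp continuous_fst))
  set A : Set (Ω × ℝ) := Set.range (fun n : ℕ => (σ^[n] ω₀, birk σ g n ω₀)) with hA
  set K : Set (Ω × ℝ) := closure A with hK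
  have hKcl : IsClosed K := isClosed_closure
  have hAsub : A ⊆ Set.univ ×ˢ Set.Icc (-M) 0 := by
    rintro p ⟨n, rfl⟩
    exact ⟨trivial, hlb n, hub n⟩
  have hKsub : K ⊆ Set.univ ×ˢ Set.Icc (-M) 0 :=
    closure_minimal hAsub (isClosed_univ.prod isClosed_Icc)
  have hKcomp : IsCompact K :=
    IsCompact.of_isClosed_subset (isCompact_univ.prod isCompact_Icc) hKcl hKsub
  have hTA : ∀ p ∈ A, T p ∈ A := by
    rintro p ⟨n, rfl⟩
    exact ⟨n+1, by simp [hT, Function.iterate_succ_apply', birk_succ]⟩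
  have hTK : ∀ p ∈ K, T p ∈ K := by
    intro p hp
    have h1 : T p ∈ closure (T '' A) :=
      image_closure_subset_closure_image hTcont ⟨p, hp, rfl⟩
    exact closure_mono (by rintro _ ⟨q, hq, rfl⟩; exact hTA q hq) h1
  have hTiter : ∀ m : ℕ, ∀ p ∈ K, (σ^[m] p.1, p.2 + birk σ g m p.1) ∈ K := by
    intro m
    induction m with
    | zero => intro p hp; simpa [birk] using hp
    | succ m ih =>
      intro p hp
      have h1 := hTK _ (ih p hp)
      have h2 : T (σ^[m] p.1, p.2 + birk σ g m p.1)
          = (σ^[m+1] p.1, p.2 + birk σ g (m+1) p.1) := by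
        simp [hT, Function.iterate_succ_apply', birk_succ]
        ring
      rwa [h2] at h1
  -- fiber additivity at ω₀
  have hFadd : ∀ a b : ℝ, (ω₀, a) ∈ K → (ω₀, b) ∈ K → (ω₀, a + b) ∈ K := by
    intro a b ha hb
    obtain ⟨xa, hxa, hlima⟩ := mem_closure_iff_seq_limit.1 ha
    obtain ⟨xb, hxb, hlimb⟩ := mem_closure_iff_seq_limit.1 hb
    choose na hna using hxa
    choose nb hnb using hxb
    have hfa : Tendsto (fun k => σ^[na k] ω₀) atTop (𝓝 ω₀) :=
      ((continuous_fst.tendsto (ω₀, a)).comp hlima).congr (fun k => by rw [Function.comp_apply, ← hna k])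
    have hsa : Tendsto (fun k => birk σ g (na k) ω₀) atTop (𝓝 a) :=
      ((continuous_snd.tendsto (ω₀, a)).comp hlima).congr (fun k => by rw [Function.comp_apply, ← hna k])
    have hfb : Tendsto (fun j => σ^[nb j] ω₀) atTop (𝓝 ω₀) :=
      ((continuous_fst.tendsto (ω₀, b)).comp hlimb).congr (fun k => by rw [Function.comp_apply, ← hnb k])
    have hsb : Tendsto (fun j => birk σ g (nb j) ω₀) atTop (𝓝 b) :=
      ((continuous_snd.tendsto (ω₀, b)).comp hlimb).congr (fun k => by rw [Function.comp_apply, ← hnb k])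
    have hmem : ∀ j : ℕ, (σ^[nb j] ω₀, a + birk σ g (nb j) ω₀) ∈ K := by
      intro j
      have hpt : ∀ k : ℕ, (σ^[nb j] (σ^[na k] ω₀),
          birk σ g (na k) ω₀ + birk σ g (nb j) (σ^[na k] ω₀)) ∈ A := by
        intro k
        refine ⟨na k + nb j, ?_⟩
        refine Prod.ext ?_ ?_
        · show σ^[na k + nb j] ω₀ = _
          rw [Nat.add_comm, Function.iterate_add_apply]
        · show birk σ g (na k + nb j) ω₀ = _
          rw [birk_add]
      have hlim : Tendsto (fun k => (σ^[nb j] (σ^[na k] ω₀),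
          birk σ g (na k) ω₀ + birk σ g (nb j) (σ^[na k] ω₀))) atTop
          (𝓝 (σ^[nb j] ω₀, a + birk σ g (nb j) ω₀)) := by
        refine Tendsto.prodMk_nhds ?_ ?_
        · exact ((hσ.iterate (nb j)).tendsto ω₀).comp hfa
        · exact hsa.add (((birk_cont hσ hg (nb j)).tendsto ω₀).comp hfa)
      exact mem_closure_of_tendsto hlim (Eventually.of_forall hpt)
    have hlim2 : Tendsto (fun j => (σ^[nb j] ω₀, a + birk σ g (nb j) ω₀)) atTop
        (𝓝 (ω₀, a + b)) := Tendsto.prodMk_nhds hfb (tendsto_const_nhds.add hsb)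
    have := mem_closure_of_tendsto hlim2 (Eventually.of_forall hmem)
    rwa [hKcl.closure_eq] at this
  have hFle : ∀ t : ℝ, (ω₀, t) ∈ K → t ≤ 0 := fun t ht => (hKsub ht).2.2
  have hFge : ∀ t : ℝ, (ω₀, t) ∈ K → -M ≤ t := fun t ht => (hKsub ht).2.1
  have hnotlt : ∀ (x : Ω) (t t' : ℝ), (x, t) ∈ K → (x, t') ∈ K → ¬ t < t' := by
    intro x t t' ht ht' hlt
    obtain ⟨y, hy, hylim⟩ := mem_closure_iff_seq_limit.1 (hmin x ω₀)
    choose m hm using hy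
    have hbase : Tendsto (fun k => σ^[m k] x) atTop (𝓝 ω₀) :=
      hylim.congr fun k => (hm k).symm
    have hq : ∀ k, (σ^[m k] x, t + birk σ g (m k) x) ∈ K := fun k => hTiter (m k) (x, t) ht
    have hq' : ∀ k, (σ^[m k] x, t' + birk σ g (m k) x) ∈ K := fun k => hTiter (m k) (x, t') ht'
    have hbdd : ∀ k, (t + birk σ g (m k) x) ∈ Set.Icc (-M) 0 := fun k => (hKsub (hq k)).2
    obtain ⟨c, hcmem, φ, hφ, hφlim⟩ := isCompact_Icc.tendsto_subseq hbdd
    have hc : (ω₀, c) ∈ K := by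
      have h1 : Tendsto (fun k => (σ^[m (φ k)] x, t + birk σ g (m (φ k)) x)) atTop
          (𝓝 (ω₀, c)) := Tendsto.prodMk_nhds (hbase.comp hφ.tendsto_atTop) hφlim
      have h2 := mem_closure_of_tendsto h1 (Eventually.of_forall fun k => hq (φ k))
      rwa [hKcl.closure_eq] at h2
    have hcd : (ω₀, c + (t' - t)) ∈ K := by
      have h3 : Tendsto (fun k => (t + birk σ g (m (φ k)) x) + (t' - t)) atTop
          (𝓝 (c + (t' - t))) := hφlim.add tendsto_const_nhds
      have hlim2 : Tendsto (fun k => t' + birk σ g (m (φ k)) x) atTop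
          (𝓝 (c + (t' - t))) := h3.congr fun k => by ring
      have h2 := mem_closure_of_tendsto
        (Tendsto.prodMk_nhds (hbase.comp hφ.tendsto_atTop) hlim2)
        (Eventually.of_forall fun k => hq' (φ k))
      rwa [hKcl.closure_eq] at h2
    have hd : 0 < t' - t := sub_pos.2 hlt
    rcases eq_or_lt_of_le (hFle c hc) with hc0 | hcneg
    · have h5 := hFle _ hcd
      rw [hc0] at h5
      linarith
    · have hiter : ∀ k : ℕ, (ω₀, ((k:ℝ)+1) * c) ∈ K := by
        intro k
        induction k with
        | zero => simpa using hc
        | succ k ih =>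
          have h6 := hFadd _ _ ih hc
          have he : (((k+1:ℕ):ℝ)+1)*c = ((k:ℝ)+1)*c + c := by push_cast; ring
          rw [he]
          exact h6
      obtain ⟨k, hk⟩ := exists_nat_gt (M / (-c))
      have h5 := hFge _ (hiter k)
      have h6 : ((k:ℝ)+1) * c < -M := by
        rw [div_lt_iff₀ (neg_pos.2 hcneg)] at hk
        nlinarith
      linarith
  have hgraph : ∀ (x : Ω) (t t' : ℝ), (x, t) ∈ K → (x, t') ∈ K → t = t' := by
    intro x t t' ht ht'
    rcases lt_trichotomy t t' with h | h | h
    · exact absurd h (hnotlt x t t' ht ht')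
    · exact h
    · exact absurd h (hnotlt x t' t ht' ht)
  have hsurj : ∀ x : Ω, ∃ t : ℝ, (x, t) ∈ K := by
    have h1 : IsClosed (Prod.fst '' K) := (hKcomp.image continuous_fst).isClosed
    have h2 : Set.range (fun n : ℕ => σ^[n] ω₀) ⊆ Prod.fst '' K := by
      rintro _ ⟨n, rfl⟩
      exact ⟨(σ^[n] ω₀, birk σ g n ω₀), subset_closure ⟨n, rfl⟩, rfl⟩
    intro x
    obtain ⟨p, hp, he⟩ := closure_minimal h2 h1 (hmin ω₀ x)
    exact ⟨p.2, by rw [← he]; exact hp⟩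
  choose u hu using hsurj
  have hcont : Continuous u := by
    rw [continuous_iff_isClosed]
    intro C hC
    have he : u ⁻¹' C = Prod.fst '' (K ∩ Set.univ ×ˢ C) := by
      ext x
      constructor
      · intro hx
        exact ⟨(x, u x), ⟨hu x, ⟨trivial, hx⟩⟩, rfl⟩
      · rintro ⟨p, ⟨hpK, -, hpC⟩, rfl⟩
        have h7 : p.2 = u p.1 := hgraph p.1 p.2 (u p.1) hpK (hu p.1)
        show u p.1 ∈ C
        rw [← h7]
        exact hpC
    rw [he]
    exact ((hKcomp.inter_right (isClosed_univ.prod hC)).image continuous_fst).isClosed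
  refine ⟨u, hcont, fun ω => ?_⟩
  have h1 : (σ ω, u ω + g ω) ∈ K := hTK (ω, u ω) (hu ω)
  have h2 := hgraph (σ ω) (u ω + g ω) (u (σ ω)) h1 (hu (σ ω))
  linarith

/-- Gottschalk–Hedlund, improved: on a minimal system, pointwise lower
boundedness of Birkhoff sums of `f - f̄` gives a continuous transfer function. -/
theorem stmt8 [MetricSpace Ω] [CompactSpace Ω] [MeasurableSpace Ω] [BorelSpace Ω]
    (σ : Ω → Ω) (hσ : Continuous σ)
    (hmin : ∀ ω : Ω, Dense (Set.range fun n : ℕ => σ^[n] ω))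
    (f : Ω → ℝ) (hf : Continuous f) (fbar : ℝ) (hfbar : IsErgMinValue σ f fbar)
    (hfin : ∀ ω : Ω, BddBelow (Set.range fun n : ℕ => birk σ (fun x => f x - fbar) (n + 1) ω)) :
    ∃ u : Ω → ℝ, Continuous u ∧ ∀ ω : Ω, f ω - fbar = u (σ ω) - u ω := by
  obtain ⟨μ, ⟨hprob, hinv⟩, hint⟩ := hfbar.1
  haveI := hprob
  haveI : Nonempty Ω := by
    rcases isEmpty_or_nonempty Ω with h | h
    · exfalso
      have h1 : μ Set.univ = 1 := measure_univ
      rw [Set.univ_eq_empty_iff.2 h, measure_empty] at h1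
      exact zero_ne_one h1
    · exact h
  have hgc : Continuous (fun x : Ω => f x - fbar) := hf.sub continuous_const
  have hgint : ∫ x, (f x - fbar) ∂μ = 0 := by
    rw [integral_sub (cont_integrable hf) (integrable_const fbar), hint, integral_const]
    simp
  obtain ⟨ω₀, hω₀⟩ := exists_nonpos_birk hσ hgc hinv hgint
  obtain ⟨c, hc⟩ := hfin ω₀
  have hub : ∀ n : ℕ, birk σ (fun x => f x - fbar) n ω₀ ≤ 0 := by
    intro n
    cases n with
    | zero => simp [birk]
    | succ n => exact hω₀ n
  have hlb : ∀ n : ℕ, -(max (-c) 0) ≤ birk σ (fun x => f x - fbar) n ω₀ := by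
    intro n
    have hm0 : (0:ℝ) ≤ max (-c) 0 := le_max_right _ _
    cases n with
    | zero =>
      have : birk σ (fun x => f x - fbar) 0 ω₀ = 0 := by simp [birk]
      rw [this]
      linarith
    | succ n =>
      have h1 : c ≤ birk σ (fun x => f x - fbar) (n+1) ω₀ := hc ⟨n, rfl⟩
      have h2 : -(max (-c) 0) ≤ c := by
        have := le_max_left (-c) 0
        linarith
      linarith
  obtain ⟨u, hucont, hueq⟩ := gh_main hσ hmin hgc hub hlb
  exact ⟨u, hucont, fun ω => hueq ω⟩
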